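/- For every t ∈ T(u), the affected sources of t are contained in the affected sources of v: S(t) ⊆ S(v). -/

import Mathlib

open scoped BigOperators

/-- A directed graph on vertex set `V` with positive real edge weights. -/
structure WDigraph (V : Type*) where
  /-- the edge relation -/
  E : V → V → Prop
  /-- the edge weights -/
  w : V → V → ℝ
  /-- weights of edges are positive -/
  pos : ∀ a b, E a b → 0 < w a b

namespace WDigraph

variable {V : Type*} [Fintype V] [DecidableEq V]

/-- `p` is a simple path from `s` to `t` in `G`: a nonempty list of pairwise
distinct vertices starting at `s`, ending at `t`, consecutive vertices joined
by edges. (Since all weights are positive, every shortest path is simple, so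
it suffices to consider simple paths throughout.) -/
def IsPath (G : WDigraph V) (s t : V) (p : List V) : Prop :=
  List.Chain' G.E p ∧ p.head? = some s ∧ p.getLast? = some t ∧ p.Nodup

/-- The total weight of a list of vertices (sum of the weights of consecutive pairs). -/
def pw (G : WDigraph V) : List V → ℝ
  | [] => 0
  | [_] => 0
  | a :: b :: r => G.w a b + G.pw (b :: r)

/-- `d(s,t)`: shortest-path distance from `s` to `t`, equal to `⊤` (infinity)
if `t` is unreachable from `s`. -/
noncomputable def dist (G : WDigraph V) (s t : V) : EReal :=
  sInf ((fun p => (G.pw p : EReal)) '' {p | G.IsPath s t p})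

/-- The set of shortest `s`-`t` paths in `G`. -/
def SP (G : WDigraph V) (s t : V) : Set (List V) :=
  {p | G.IsPath s t p ∧ (G.pw p : EReal) = G.dist s t}

/-- `σ_{st}`: the number of shortest `s`-`t` paths in `G`. -/
noncomputable def sigma (G : WDigraph V) (s t : V) : ℕ :=
  (G.SP s t).ncard

/-- `σ_{st}(v)`: the number of shortest `s`-`t` paths in `G` that contain `v`. -/
noncomputable def sigmaV (G : WDigraph V) (s t v : V) : ℕ :=
  {p ∈ G.SP s t | v ∈ p}.ncard

/-- `σ_{st}(v,w)`: the number of shortest `s`-`t` paths in `G` using the edge `(v,w)`. -/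
noncomputable def sigmaE (G : WDigraph V) (s t v w : V) : ℕ :=
  {p ∈ G.SP s t | [v, w] <:+: p}.ncard

/-- `P_s(t)`: the set of predecessors of `t` with respect to source `s`:
nodes `y` with `(y,t) ∈ E` and `d(s,y) + ω(y,t) = d(s,t) < ∞`. -/
def pred (G : WDigraph V) (s t : V) : Set V :=
  {y | G.E y t ∧ G.dist s y + (G.w y t : EReal) = G.dist s t ∧ G.dist s t < ⊤}

/-- `δ_{s•}(v)`: Brandes's one-sided dependency of `s` on `v`
(a summand is `0` whenever its denominator is `0`, which is automatic since
in Lean division by zero yields zero). -/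
noncomputable def delta (G : WDigraph V) (s v : V) : ℝ :=
  ∑ᶠ t ∈ {t : V | t ≠ s ∧ t ≠ v}, (G.sigmaV s t v : ℝ) / (G.sigma s t : ℝ)

/-- `c_B(v)`: the betweenness centrality of `v`. -/
noncomputable def bc (G : WDigraph V) (v : V) : ℝ :=
  ∑ᶠ s ∈ {s : V | s ≠ v}, G.delta s v

/-- `G'` is obtained from `G` by the incremental update `(u, v, ω'(u,v))`:
either a new edge `(u,v) ∉ E` is inserted with positive weight, or the weight
of the existing edge `(u,v)` is decreased; all other edges and weights are
unchanged. (Positivity of all weights is part of the `WDigraph` structure.) -/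
structure IsUpdate (G G' : WDigraph V) (u v : V) : Prop where
  /-- the updated edge is present in `G'` -/
  edge' : G'.E u v
  /-- `E' = E ∪ {(u,v)}` -/
  edge_iff : ∀ a b, G'.E a b ↔ G.E a b ∨ a = u ∧ b = v
  /-- `ω'` agrees with `ω` on all edges other than `(u,v)` -/
  weight_eq : ∀ a b, ¬(a = u ∧ b = v) → G'.w a b = G.w a b
  /-- either an insertion of a new edge, or a weight decrease of an existing one -/
  insert_or_decrease : ¬ G.E u v ∨ (G.E u v ∧ G'.w u v < G.w u v)

/-- `S(t)`: the affected sources of `t`. -/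
def affS (G G' : WDigraph V) (t : V) : Set V :=
  {s | G.dist s t > G'.dist s t ∨ G.sigma s t ≠ G'.sigma s t}

/-- `T(s)`: the affected targets of `s`. -/
def affT (G G' : WDigraph V) (s : V) : Set V :=
  {t | G.dist s t > G'.dist s t ∨ G.sigma s t ≠ G'.sigma s t}

/-- `Δ_{s•}(v) = Σ_{t ∈ T(s), t ≠ v} σ_{st}(v)/σ_{st}`, computed in `G`
(`0`-convention for zero denominators). -/
noncomputable def Delta (G G' : WDigraph V) (s v : V) : ℝ :=
  ∑ᶠ t ∈ {t : V | t ∈ affT G G' s ∧ t ≠ v}, (G.sigmaV s t v : ℝ) / (G.sigma s t : ℝ)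

/-- `Δ'_{s•}(v) = Σ_{t ∈ T(s), t ≠ v} σ'_{st}(v)/σ'_{st}`, computed in `G'`
(`0`-convention for zero denominators). -/
noncomputable def Delta' (G G' : WDigraph V) (s v : V) : ℝ :=
  ∑ᶠ t ∈ {t : V | t ∈ affT G G' s ∧ t ≠ v}, (G'.sigmaV s t v : ℝ) / (G'.sigma s t : ℝ)

end WDigraph

/-! If `s ∉ S(v)`, the shortest `s`-`v` paths of `G'` are exactly those of `G`, and none of them
uses `(u,v)`, since a `G`-path through `(u,v)` becomes strictly shorter in `G'`. So a `G'`-path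
from `s` through `(u,v)` is strictly longer than `d(s,v) + d(v,t) ≥ d(s,t)`, while a `G'`-path
avoiding `(u,v)` is a `G`-path of the same weight. Hence `d'(s,t) = d(s,t)` and the shortest
`s`-`t` paths of `G` and `G'` coincide, for every `t`. -/

lemma _root_.List.exists_eq_append_cons_cons_of_infix {α : Type*} {a b : α} {l : List α}
    (h : [a, b] <:+: l) : ∃ A B, l = A ++ a :: b :: B :=
  let ⟨A, B, hl⟩ := h
  ⟨A, B, by simp [← hl]⟩

namespace WDigraph

variable {V : Type*}

lemma pw_nonneg (G : WDigraph V) : ∀ {p : List V}, p.IsChain G.E → 0 ≤ G.pw p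
  | [], _ | [_], _ => le_rfl
  | a :: b :: r, hc => by
    rw [List.isChain_cons_cons] at hc
    have := G.pos a b hc.1
    have := G.pw_nonneg hc.2
    simp only [pw]
    linarith

lemma pw_append_cons (G : WDigraph V) (x : V) :
    ∀ l₁ l₂ : List V, G.pw (l₁ ++ x :: l₂) = G.pw (l₁ ++ [x]) + G.pw (x :: l₂)
  | [], l₂ => by simp [pw]
  | [a], l₂ => by simp [pw]
  | a :: b :: l₁, l₂ => by
    have := G.pw_append_cons x (b :: l₁) l₂
    simp only [List.cons_append, pw] at this ⊢
    linarith

lemma IsPath.of_append_cons {G : WDigraph V} {s t x : V} {A B : List V}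
    (hp : G.IsPath s t (A ++ x :: B)) : G.IsPath s x (A ++ [x]) ∧ G.IsPath x t (x :: B) := by
  obtain ⟨hc, hs, ht, hnd⟩ := hp
  refine ⟨⟨hc.prefix ⟨B, by simp⟩, by simpa using hs, by simp, ?_⟩,
    ⟨hc.suffix ⟨A, rfl⟩, rfl, by simpa using ht,
      hnd.sublist (List.sublist_append_right A _)⟩⟩
  exact hnd.sublist (by simp)

lemma exists_isPath_pw_le (G : WDigraph V) {s t : V} {p : List V} (hc : p.IsChain G.E)
    (hs : p.head? = some s) (ht : p.getLast? = some t) :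
    ∃ q, G.IsPath s t q ∧ G.pw q ≤ G.pw p := by
  induction hn : p.length using Nat.strong_induction_on generalizing p with
  | _ n ih =>
  by_cases hnd : p.Nodup
  · exact ⟨p, ⟨hc, hs, ht, hnd⟩, le_rfl⟩
  obtain ⟨x, hx⟩ : ∃ x, [x, x].Sublist p := by simpa [List.nodup_iff_sublist] using hnd
  obtain ⟨A, B, C, rfl⟩ : ∃ A B C, p = A ++ x :: (B ++ x :: C) := by
    obtain ⟨r₁, r₂, rfl, hx₁, hx₂⟩ := List.cons_sublist_iff.mp hx
    obtain ⟨A, B₁, rfl⟩ := List.append_of_mem hx₁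
    obtain ⟨B₂, C, rfl⟩ := List.append_of_mem (List.singleton_sublist.mp hx₂)
    exact ⟨A, B₁ ++ B₂, C, by simp⟩
  have hpre : (A ++ [x]).IsChain G.E := hc.prefix ⟨B ++ x :: C, by simp⟩
  have hsuf : (x :: C).IsChain G.E := hc.suffix ⟨A ++ x :: B, by simp⟩
  have hlast : (A ++ x :: C).getLast? = some t := by
    rw [← ht, show A ++ x :: (B ++ x :: C) = (A ++ x :: B) ++ x :: C by simp,
      List.getLast?_append_of_ne_nil _ (List.cons_ne_nil _ _),
      List.getLast?_append_of_ne_nil _ (List.cons_ne_nil _ _)]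
  obtain ⟨q, hq, hqp⟩ := ih _ (by simp [← hn])
    (by simpa using hpre.append_overlap hsuf (by simp)) (by simpa using hs) hlast rfl
  have hcycle : 0 ≤ G.pw ((x :: B) ++ [x]) := G.pw_nonneg (hc.infix ⟨A, C, by simp⟩)
  refine ⟨q, hq, hqp.trans ?_⟩
  rw [G.pw_append_cons x A C, G.pw_append_cons x A (B ++ x :: C),
    show x :: (B ++ x :: C) = (x :: B) ++ x :: C from rfl, G.pw_append_cons x (x :: B) C]
  linarith

lemma finite_setOf_isPath [Fintype V] (G : WDigraph V) (s t : V) : {p | G.IsPath s t p}.Finite :=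
  (List.finite_length_le V (Fintype.card V)).subset fun _ hp => hp.2.2.2.length_le_card

lemma dist_le_pw (G : WDigraph V) {s t : V} {p : List V} (hp : G.IsPath s t p) :
    G.dist s t ≤ G.pw p :=
  sInf_le ⟨p, hp, rfl⟩

lemma le_dist (G : WDigraph V) {s t : V} {x : EReal} (h : ∀ p, G.IsPath s t p → x ≤ G.pw p) :
    x ≤ G.dist s t :=
  le_sInf fun _ ⟨p, hp, hx⟩ => hx ▸ h p hp

lemma exists_pw_eq_dist [Fintype V] (G : WDigraph V) {s t : V} (h : G.dist s t ≠ ⊤) :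
    ∃ p, G.IsPath s t p ∧ (G.pw p : EReal) = G.dist s t := by
  have hne : ((fun p => (G.pw p : EReal)) '' {p | G.IsPath s t p}).Nonempty := by
    by_contra hempty
    exact h (by rw [dist, Set.not_nonempty_iff_eq_empty.mp hempty, sInf_empty])
  exact hne.csInf_mem ((G.finite_setOf_isPath s t).image _)

lemma dist_le_dist_add_pw [Fintype V] (G : WDigraph V) (s : V) {v t : V} {p : List V}
    (hp : G.IsPath v t p) : G.dist s t ≤ G.dist s v + G.pw p := by
  by_cases hsv : G.dist s v = ⊤
  · simp [hsv]
  obtain ⟨q, hq, hqd⟩ := G.exists_pw_eq_dist hsv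
  obtain ⟨q', rfl⟩ := List.getLast?_eq_some_iff.mp hq.2.2.1
  obtain ⟨p', rfl⟩ := List.head?_eq_some_iff.mp hp.2.1
  have hwalk : (q' ++ v :: p').IsChain G.E := by
    simpa using hq.1.append_overlap (l₂ := [v]) hp.1 (by simp)
  obtain ⟨r, hr, hrw⟩ := G.exists_isPath_pw_le hwalk (by simpa using hq.2.1)
    (by simpa using hp.2.2.1)
  calc G.dist s t ≤ G.pw r := G.dist_le_pw hr
    _ ≤ ((G.pw (q' ++ [v]) + G.pw (v :: p') : ℝ) : EReal) := by
      rw [← G.pw_append_cons]; exact_mod_cast hrw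
    _ = G.dist s v + G.pw (v :: p') := by rw [EReal.coe_add, hqd]

section Update

variable {G G' : WDigraph V} {u v : V}

lemma IsUpdate.isChain (h : IsUpdate G G' u v) {p : List V} (hc : p.IsChain G.E) :
    p.IsChain G'.E :=
  hc.imp fun a b hab => (h.edge_iff a b).mpr (Or.inl hab)

lemma IsUpdate.isPath (h : IsUpdate G G' u v) {s t : V} {p : List V} (hp : G.IsPath s t p) :
    G'.IsPath s t p :=
  ⟨h.isChain hp.1, hp.2⟩

lemma IsUpdate.isChain_of_not_infix (h : IsUpdate G G' u v) :
    ∀ {p : List V}, p.IsChain G'.E → ¬ [u, v] <:+: p → p.IsChain G.E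
  | [], _, _ => List.isChain_nil
  | [_], _, _ => List.isChain_singleton _
  | a :: b :: r, hc, hn => by
    rw [List.isChain_cons_cons] at hc ⊢
    refine ⟨?_, h.isChain_of_not_infix hc.2 fun hin => hn (List.infix_cons hin)⟩
    refine ((h.edge_iff a b).mp hc.1).resolve_right ?_
    rintro ⟨rfl, rfl⟩
    exact hn ⟨[], r, rfl⟩

lemma IsUpdate.isPath_of_not_infix (h : IsUpdate G G' u v) {s t : V} {p : List V}
    (hp : G'.IsPath s t p) (hn : ¬ [u, v] <:+: p) : G.IsPath s t p :=
  ⟨h.isChain_of_not_infix hp.1 hn, hp.2⟩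

lemma IsUpdate.pw_eq_of_not_infix (h : IsUpdate G G' u v) :
    ∀ {p : List V}, ¬ [u, v] <:+: p → G'.pw p = G.pw p
  | [], _ | [_], _ => rfl
  | a :: b :: r, hn => by
    have hab : ¬(a = u ∧ b = v) := by
      rintro ⟨rfl, rfl⟩
      exact hn ⟨[], r, rfl⟩
    simp only [pw, h.weight_eq a b hab, h.pw_eq_of_not_infix fun hin => hn (List.infix_cons hin)]

lemma IsUpdate.w_le (h : IsUpdate G G' u v) {a b : V} (hab : G.E a b) : G'.w a b ≤ G.w a b := by
  by_cases huv : a = u ∧ b = v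
  · obtain ⟨rfl, rfl⟩ := huv
    exact (h.insert_or_decrease.resolve_left (not_not.mpr hab)).2.le
  · rw [h.weight_eq a b huv]

lemma IsUpdate.pw_le (h : IsUpdate G G' u v) :
    ∀ {p : List V}, p.IsChain G.E → G'.pw p ≤ G.pw p
  | [], _ | [_], _ => le_rfl
  | a :: b :: r, hc => by
    rw [List.isChain_cons_cons] at hc
    have := h.w_le hc.1
    have := h.pw_le hc.2
    simp only [pw]
    linarith

lemma IsUpdate.pw_lt_of_infix (h : IsUpdate G G' u v) {p : List V} (hc : p.IsChain G.E)
    (hin : [u, v] <:+: p) : G'.pw p < G.pw p := by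
  have huv : G.E u v := List.isChain_pair.mp (hc.infix hin)
  have hdec := (h.insert_or_decrease.resolve_left (not_not.mpr huv)).2
  obtain ⟨A, B, rfl⟩ := List.exists_eq_append_cons_cons_of_infix hin
  have hA := h.pw_le (hc.prefix ⟨v :: B, by simp⟩ : (A ++ [u]).IsChain G.E)
  have hB := h.pw_le (hc.suffix ⟨A ++ [u], by simp⟩ : (v :: B).IsChain G.E)
  rw [G.pw_append_cons, G'.pw_append_cons]
  simp only [pw] at hA hB ⊢
  linarith

lemma IsUpdate.dist_le (h : IsUpdate G G' u v) (s t : V) : G'.dist s t ≤ G.dist s t :=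
  G.le_dist fun p hp => (G'.dist_le_pw (h.isPath hp)).trans (by exact_mod_cast h.pw_le hp.1)

lemma IsUpdate.notMem_affS_iff (h : IsUpdate G G' u v) {s t : V} :
    s ∉ affS G G' t ↔ G'.dist s t = G.dist s t ∧ G.sigma s t = G'.sigma s t := by
  simp only [affS, Set.mem_ofPred_eq, not_or, not_lt, not_not, (h.dist_le s t).ge_iff_eq]

lemma IsUpdate.not_infix_of_mem_SP (h : IsUpdate G G' u v) {s t : V}
    (hd : G'.dist s t = G.dist s t) {p : List V} (hp : p ∈ G.SP s t) : ¬ [u, v] <:+: p := by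
  intro hin
  refine lt_irrefl (G.dist s t) ?_
  calc G.dist s t = G'.dist s t := hd.symm
    _ ≤ G'.pw p := G'.dist_le_pw (h.isPath hp.1)
    _ < G.pw p := by exact_mod_cast h.pw_lt_of_infix hp.1.1 hin
    _ = G.dist s t := hp.2

lemma IsUpdate.SP_subset (h : IsUpdate G G' u v) {s t : V} (hd : G'.dist s t = G.dist s t) :
    G.SP s t ⊆ G'.SP s t := fun p hp =>
  ⟨h.isPath hp.1, by rw [h.pw_eq_of_not_infix (h.not_infix_of_mem_SP hd hp), hp.2, hd]⟩

variable [Fintype V]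

lemma IsUpdate.SP_eq_of_notMem_affS (h : IsUpdate G G' u v) {s t : V} (hs : s ∉ affS G G' t) :
    G.SP s t = G'.SP s t := by
  obtain ⟨hd, hσ⟩ := h.notMem_affS_iff.mp hs
  exact Set.eq_of_subset_of_ncard_le (h.SP_subset hd) hσ.symm.le
    ((G'.finite_setOf_isPath s t).subset fun _ hp => hp.1)

lemma IsUpdate.dist_lt_pw_of_infix (h : IsUpdate G G' u v) {s t : V} (hs : s ∉ affS G G' v)
    {p : List V} (hp : G'.IsPath s t p) (hin : [u, v] <:+: p) : G.dist s t < G'.pw p := by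
  obtain ⟨A, B, rfl⟩ := List.exists_eq_append_cons_cons_of_infix hin
  have hnd := hp.2.2.2
  rw [show A ++ u :: v :: B = (A ++ [u]) ++ v :: B by simp] at hp hnd ⊢
  obtain ⟨hq, hr⟩ := hp.of_append_cons
  have hrn : ¬ [u, v] <:+: v :: B := fun hin' =>
    List.disjoint_of_nodup_append hnd (a := u) (by simp) (hin'.subset (by simp))
  obtain ⟨hdv, -⟩ := h.notMem_affS_iff.mp hs
  have hq_not_SP : A ++ [u] ++ [v] ∉ G'.SP s v := by
    rw [← h.SP_eq_of_notMem_affS hs]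
    exact fun hmem => h.not_infix_of_mem_SP hdv hmem ⟨A, [], by simp⟩
  have hqd : G.dist s v < G'.pw (A ++ [u] ++ [v]) := by
    rw [← hdv]
    exact (G'.dist_le_pw hq).lt_of_ne fun heq => hq_not_SP ⟨hq, heq.symm⟩
  calc G.dist s t ≤ G.dist s v + G.pw (v :: B) :=
        G.dist_le_dist_add_pw s (h.isPath_of_not_infix hr hrn)
    _ < G'.pw (A ++ [u] ++ [v]) + G.pw (v :: B) := EReal.add_lt_add_right_coe hqd _
    _ = G'.pw (A ++ [u] ++ v :: B) := by
      rw [G'.pw_append_cons v (A ++ [u]) B, h.pw_eq_of_not_infix hrn, EReal.coe_add]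

lemma IsUpdate.dist_eq_of_notMem_affS_head (h : IsUpdate G G' u v) {s : V} (hs : s ∉ affS G G' v)
    (t : V) : G'.dist s t = G.dist s t := by
  refine le_antisymm (h.dist_le s t) (G'.le_dist fun p hp => ?_)
  by_cases hin : [u, v] <:+: p
  · exact (h.dist_lt_pw_of_infix hs hp hin).le
  · rw [h.pw_eq_of_not_infix hin]
    exact G.dist_le_pw (h.isPath_of_not_infix hp hin)

lemma IsUpdate.SP_eq_of_notMem_affS_head (h : IsUpdate G G' u v) {s : V} (hs : s ∉ affS G G' v)
    (t : V) : G.SP s t = G'.SP s t := by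
  have hd := h.dist_eq_of_notMem_affS_head hs t
  refine (h.SP_subset hd).antisymm fun p ⟨hp, hpd⟩ => ?_
  by_cases hin : [u, v] <:+: p
  · exact absurd (h.dist_lt_pw_of_infix hs hp hin) (by rw [hpd, hd]; exact lt_irrefl _)
  · exact ⟨h.isPath_of_not_infix hp hin, by rw [← h.pw_eq_of_not_infix hin, hpd, hd]⟩

end Update

variable [Fintype V] [DecidableEq V]

theorem affS_subset_affS_v_general (G G' : WDigraph V) (u v : V)
    (h : IsUpdate G G' u v) (t : V) :
    affS G G' t ⊆ affS G G' v := by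
  intro s hs
  by_contra hsv
  refine h.notMem_affS_iff.mpr ⟨h.dist_eq_of_notMem_affS_head hsv t, ?_⟩ hs
  rw [sigma, sigma, h.SP_eq_of_notMem_affS_head hsv t]

/-- For every `t ∈ T(u)`, the affected sources of `t` are contained
in the affected sources of `v`: `S(t) ⊆ S(v)`. -/
theorem affS_subset_affS_v (G G' : WDigraph V) (u v : V)
    (h : IsUpdate G G' u v) (t : V) (ht : t ∈ affT G G' u) :
    affS G G' t ⊆ affS G G' v :=
  affS_subset_affS_v_general G G' u v h t

end WDigraph
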